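/- For all φ₀, φ₁ with 0 < φ₀ < φ₁ < π/2, the map T_D(α) := 4T(α) − T₁(α, φ₀) − T₁(α, φ₁) satisfies T_D(α) > T^* := 3T(φ₁) − T₁(φ₁, φ₀) for every α ∈ (φ₁, π/2). -/

import Mathlib

/-!
Substituting `sin x = sin α · sin θ` turns `T(α) − T₁(α, c)` into
`∫_{θ_c}^{π/2} dθ / √(2 (1 − sin² α sin² θ))` with `sin θ_c = sin c / sin α`: the integrand is now
continuous, grows with `α`, and the lower limit `θ_c` decreases as `α` grows. Hence `T` and
`T − T₁(·, φ₀)` are nondecreasing on `(φ₀, π/2)` and `T(α) − T₁(α, φ₁) > 0` for `α > φ₁`, and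
`T_D(α) − T^* = 2 (T(α) − T(φ₁)) + ((T − T₁)(α, φ₀) − (T − T₁)(φ₁, φ₀)) + (T − T₁)(α, φ₁)`.
-/

open Real

/-- The time map `T(α) = ∫₀^α dx / √(cos 2x − cos 2α)`. -/
noncomputable def timeMapT (α : ℝ) : ℝ :=
  ∫ x in (0:ℝ)..α, 1 / Real.sqrt (Real.cos (2 * x) - Real.cos (2 * α))

/-- The time map `T₁(α, φ) = ∫₀^φ dx / √(cos 2x − cos 2α)`. -/
noncomputable def timeMapT1 (α φ : ℝ) : ℝ :=
  ∫ x in (0:ℝ)..φ, 1 / Real.sqrt (Real.cos (2 * x) - Real.cos (2 * α))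

open Set MeasureTheory

noncomputable def timeIntegrand (α x : ℝ) : ℝ := 1 / √(cos (2 * x) - cos (2 * α))

-- `∫₀^{π/2} ellipticIntegrand k = K(k) / √2`, `K` the complete elliptic integral of the first kind.
noncomputable def ellipticIntegrand (k θ : ℝ) : ℝ := 1 / √(2 * (1 - k ^ 2 * sin θ ^ 2))

lemma cos_two_mul_sub_cos_two_mul (x α : ℝ) :
    cos (2 * x) - cos (2 * α) = 2 * (sin α ^ 2 - sin x ^ 2) := by
  rw [cos_two_mul_eq_one_sub, cos_two_mul_eq_one_sub]; ring

lemma sin_sq_lt_one {α : ℝ} (h0 : 0 < α) (hα : α < π / 2) : sin α ^ 2 < 1 := by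
  have := cos_pos_of_mem_Ioo ⟨by linarith, hα⟩
  nlinarith [sin_sq_add_cos_sq α]

lemma one_sub_sq_mul_sin_sq_pos {k : ℝ} (hk : k ^ 2 < 1) (θ : ℝ) : 0 < 1 - k ^ 2 * sin θ ^ 2 := by
  nlinarith [sin_sq_le_one θ, sq_nonneg k]

lemma ellipticIntegrand_pos {k : ℝ} (hk : k ^ 2 < 1) (θ : ℝ) : 0 < ellipticIntegrand k θ := by
  have := one_sub_sq_mul_sin_sq_pos hk θ
  unfold ellipticIntegrand; positivity

lemma continuous_ellipticIntegrand {k : ℝ} (hk : k ^ 2 < 1) : Continuous (ellipticIntegrand k) :=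
  continuous_const.div (by fun_prop) fun θ ↦ by
    have := one_sub_sq_mul_sin_sq_pos hk θ; positivity

lemma ellipticIntegrand_le_ellipticIntegrand {k k' : ℝ} (hkk' : k ^ 2 ≤ k' ^ 2) (hk' : k' ^ 2 < 1)
    (θ : ℝ) : ellipticIntegrand k θ ≤ ellipticIntegrand k' θ := by
  have := one_sub_sq_mul_sin_sq_pos hk' θ
  unfold ellipticIntegrand
  gcongr

lemma hasDerivAt_arcsin_mul_sin {k : ℝ} (hk : k ^ 2 < 1) (θ : ℝ) :
    HasDerivAt (fun θ ↦ arcsin (k * sin θ)) (1 / √(1 - (k * sin θ) ^ 2) * (k * cos θ)) θ := by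
  have h : (k * sin θ) ^ 2 < 1 := by
    have := one_sub_sq_mul_sin_sq_pos hk θ; nlinarith
  have h₁ : k * sin θ ≠ -1 := fun h' ↦ by rw [h'] at h; norm_num at h
  have h₂ : k * sin θ ≠ 1 := fun h' ↦ by rw [h'] at h; norm_num at h
  exact (hasDerivAt_arcsin h₁ h₂).comp θ ((hasDerivAt_sin θ).const_mul k)

lemma deriv_arcsin_mul_sin_mul_timeIntegrand {α θ : ℝ} (h0 : 0 < α) (hα : α < π / 2)
    (hθ : θ ∈ Ioo (-(π / 2)) (π / 2)) :
    1 / √(1 - (sin α * sin θ) ^ 2) * (sin α * cos θ) * timeIntegrand α (arcsin (sin α * sin θ))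
      = ellipticIntegrand (sin α) θ := by
  have hs : 0 < sin α := sin_pos_of_pos_of_lt_pi h0 (by linarith)
  have hc : 0 < cos θ := cos_pos_of_mem_Ioo hθ
  have hpos := one_sub_sq_mul_sin_sq_pos (sin_sq_lt_one h0 hα) θ
  have hy : |sin α * sin θ| ≤ 1 := by
    rw [abs_le_one_iff_mul_self_le_one]; nlinarith
  have hdiff : cos (2 * arcsin (sin α * sin θ)) - cos (2 * α) = 2 * (sin α * cos θ) ^ 2 := by
    rw [cos_two_mul_sub_cos_two_mul, sin_arcsin (abs_le.1 hy).1 (abs_le.1 hy).2]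
    nlinarith [sin_sq_add_cos_sq θ]
  unfold timeIntegrand ellipticIntegrand
  rw [hdiff, sqrt_mul zero_le_two, sqrt_mul zero_le_two, sqrt_sq (by positivity)]
  have : √(1 - (sin α * sin θ) ^ 2) ≠ 0 := by rw [mul_pow]; positivity
  field_simp

noncomputable def substAngle (α c : ℝ) : ℝ := arcsin (sin c / sin α)

lemma arcsin_sin_mul_sin_substAngle {α c : ℝ} (h0 : 0 < α) (hα : α < π / 2)
    (hc : c ∈ Icc (-α) α) : arcsin (sin α * sin (substAngle α c)) = c := by
  obtain ⟨hc₁, hc₂⟩ := hc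
  have hs : 0 < sin α := sin_pos_of_pos_of_lt_pi h0 (by linarith)
  have habs : |sin c| ≤ sin α := by
    rw [abs_le]; constructor
    · rw [← sin_neg]; exact sin_le_sin_of_le_of_le_pi_div_two (by linarith) (by linarith) hc₁
    · exact sin_le_sin_of_le_of_le_pi_div_two (by linarith) hα.le hc₂
  have hq : |sin c / sin α| ≤ 1 := by rwa [abs_div, abs_of_pos hs, div_le_one hs]
  rw [substAngle, sin_arcsin (abs_le.1 hq).1 (abs_le.1 hq).2, mul_div_cancel₀ _ hs.ne',
    arcsin_sin (by linarith) (by linarith)]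

theorem integrableOn_timeIntegrand_and_setIntegral_eq {α c : ℝ} (h0 : 0 < α) (hα : α < π / 2)
    (hc : c ∈ Icc (-α) α) :
    IntegrableOn (timeIntegrand α) (Icc c α) ∧
      ∫ x in Icc c α, timeIntegrand α x
        = ∫ θ in Icc (substAngle α c) (π / 2), ellipticIntegrand (sin α) θ := by
  set a := substAngle α c
  set Φ : ℝ → ℝ := fun θ ↦ arcsin (sin α * sin θ)
  set Φ' : ℝ → ℝ := fun θ ↦ 1 / √(1 - (sin α * sin θ) ^ 2) * (sin α * cos θ)
  have hk := sin_sq_lt_one h0 hα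
  have hs : 0 < sin α := sin_pos_of_pos_of_lt_pi h0 (by linarith)
  have hΦa : Φ a = c := arcsin_sin_mul_sin_substAngle h0 hα hc
  have hΦ : Φ (π / 2) = α := by
    simp only [Φ, sin_pi_div_two, mul_one]; exact arcsin_sin (by linarith) hα.le
  have ha : a ≤ π / 2 := arcsin_le_pi_div_two _
  have hIoo : Ioo a (π / 2) ⊆ Ioo (-(π / 2)) (π / 2) :=
    Ioo_subset_Ioo_left (neg_pi_div_two_le_arcsin _)
  have hcont : ContinuousOn Φ (Icc a (π / 2)) := by fun_prop
  have hderiv : ∀ θ ∈ Ioo a (π / 2), HasDerivAt Φ (Φ' θ) θ :=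
    fun θ _ ↦ hasDerivAt_arcsin_mul_sin hk θ
  have hnonneg : ∀ θ ∈ Ioo a (π / 2), 0 ≤ Φ' θ :=
    fun θ hθ ↦ by have := cos_pos_of_mem_Ioo (hIoo hθ); positivity
  have heq : EqOn (fun θ ↦ Φ' θ • timeIntegrand α (Φ θ)) (ellipticIntegrand (sin α))
      (Ioo a (π / 2)) :=
    fun θ hθ ↦ deriv_arcsin_mul_sin_mul_timeIntegrand h0 hα (hIoo hθ)
  -- The change of variables for monotone maps presupposes no integrability, so the singularity of
  -- `timeIntegrand α` at `α` costs nothing.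
  have hint := integrableOn_Icc_deriv_smul_iff_of_deriv_nonneg (g := timeIntegrand α)
    hcont hderiv hnonneg ha
  have hval := integral_Icc_deriv_smul_of_deriv_nonneg (g := timeIntegrand α)
    hcont hderiv hnonneg ha
  rw [hΦa, hΦ] at hint hval
  rw [integral_Icc_eq_integral_Ioo, setIntegral_congr_fun measurableSet_Ioo heq,
    ← integral_Icc_eq_integral_Ioo] at hval
  refine ⟨hint.1 ?_, hval.symm⟩
  rw [integrableOn_Icc_iff_integrableOn_Ioo, integrableOn_congr_fun heq measurableSet_Ioo]
  exact (continuous_ellipticIntegrand hk).integrableOn_Icc.mono_set Ioo_subset_Icc_self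

theorem timeMapT_sub_timeMapT1 {α c : ℝ} (h0 : 0 < α) (hα : α < π / 2) (hc : c ∈ Icc (-α) α) :
    timeMapT α - timeMapT1 α c
      = ∫ θ in substAngle α c..π / 2, ellipticIntegrand (sin α) θ := by
  have hint := (integrableOn_timeIntegrand_and_setIntegral_eq h0 hα
    (left_mem_Icc.2 (neg_le_self h0.le))).1
  have hzero : (0 : ℝ) ∈ Icc (-α) α := ⟨by linarith, h0.le⟩
  have h0α : IntervalIntegrable (timeIntegrand α) volume 0 α :=
    (hint.mono_set (uIcc_subset_Icc hzero ⟨by linarith, le_rfl⟩)).intervalIntegrable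
  have h0c : IntervalIntegrable (timeIntegrand α) volume 0 c :=
    (hint.mono_set (uIcc_subset_Icc hzero hc)).intervalIntegrable
  have ha : substAngle α c ≤ π / 2 := arcsin_le_pi_div_two _
  calc timeMapT α - timeMapT1 α c
      = ∫ x in c..α, timeIntegrand α x := intervalIntegral.integral_interval_sub_left h0α h0c
    _ = ∫ θ in substAngle α c..π / 2, ellipticIntegrand (sin α) θ := by
      rw [intervalIntegral.integral_of_le hc.2, intervalIntegral.integral_of_le ha,
        ← integral_Icc_eq_integral_Ioc, ← integral_Icc_eq_integral_Ioc]
      exact (integrableOn_timeIntegrand_and_setIntegral_eq h0 hα hc).2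

theorem timeMapT_eq_integral_ellipticIntegrand {α : ℝ} (h0 : 0 < α) (hα : α < π / 2) :
    timeMapT α = ∫ θ in (0 : ℝ)..π / 2, ellipticIntegrand (sin α) θ := by
  simpa [timeMapT1, substAngle] using timeMapT_sub_timeMapT1 h0 hα ⟨by linarith, h0.le⟩

lemma integral_ellipticIntegrand_le_integral {k k' a a' b : ℝ} (hkk' : k ^ 2 ≤ k' ^ 2)
    (hk' : k' ^ 2 < 1) (ha' : a' ≤ a) (hab : a ≤ b) :
    ∫ θ in a..b, ellipticIntegrand k θ ≤ ∫ θ in a'..b, ellipticIntegrand k' θ :=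
  calc ∫ θ in a..b, ellipticIntegrand k θ
      ≤ ∫ θ in a..b, ellipticIntegrand k' θ :=
        intervalIntegral.integral_mono_on hab
          ((continuous_ellipticIntegrand (hkk'.trans_lt hk')).intervalIntegrable _ _)
          ((continuous_ellipticIntegrand hk').intervalIntegrable _ _)
          fun θ _ ↦ ellipticIntegrand_le_ellipticIntegrand hkk' hk' θ
    _ ≤ ∫ θ in a'..b, ellipticIntegrand k' θ :=
        intervalIntegral.integral_mono_interval ha' hab le_rfl
          (Filter.Eventually.of_forall fun θ ↦ (ellipticIntegrand_pos hk' θ).le)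
          ((continuous_ellipticIntegrand hk').intervalIntegrable _ _)

lemma substAngle_le_substAngle {α β c : ℝ} (hc : 0 ≤ sin c) (hβ : 0 < β) (hβα : β ≤ α)
    (hα : α ≤ π / 2) : substAngle α c ≤ substAngle β c :=
  arcsin_le_arcsin <| div_le_div_of_nonneg_left hc (sin_pos_of_pos_of_lt_pi hβ (by linarith))
    (sin_le_sin_of_le_of_le_pi_div_two (by linarith) hα hβα)

lemma substAngle_lt_pi_div_two {α c : ℝ} (hc : -(π / 2) ≤ c) (hcα : c < α) (hα : α ≤ π / 2)
    (h0 : 0 < α) : substAngle α c < π / 2 := by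
  rw [substAngle, arcsin_lt_pi_div_two, div_lt_one (sin_pos_of_pos_of_lt_pi h0 (by linarith))]
  exact strictMonoOn_sin ⟨hc, by linarith⟩ ⟨by linarith, hα⟩ hcα

/-- For `0 < φ₀ < φ₁ < π/2`, the map
`T_D(α) = 4T(α) − T₁(α, φ₀) − T₁(α, φ₁)` satisfies
`T_D(α) > T^* = 3T(φ₁) − T₁(φ₁, φ₀)` for every `α ∈ (φ₁, π/2)`. -/
theorem timeMapTD_supercritical (φ₀ φ₁ : ℝ) (h₀ : 0 < φ₀) (h₀₁ : φ₀ < φ₁)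
    (h₁ : φ₁ < π / 2) :
    ∀ α ∈ Set.Ioo φ₁ (π / 2),
      4 * timeMapT α - timeMapT1 α φ₀ - timeMapT1 α φ₁ >
        3 * timeMapT φ₁ - timeMapT1 φ₁ φ₀ := by
  rintro α ⟨hφ₁α, hα⟩
  have hφ₁ : 0 < φ₁ := h₀.trans h₀₁
  have hα₀ : 0 < α := hφ₁.trans hφ₁α
  have hk : sin α ^ 2 < 1 := sin_sq_lt_one hα₀ hα
  have hkk : sin φ₁ ^ 2 ≤ sin α ^ 2 := pow_le_pow_left₀
    (sin_nonneg_of_nonneg_of_le_pi hφ₁.le (by linarith))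
    (sin_le_sin_of_le_of_le_pi_div_two (by linarith) hα.le hφ₁α.le) 2
  have hT_α := timeMapT_eq_integral_ellipticIntegrand hα₀ hα
  have hT_φ₁ := timeMapT_eq_integral_ellipticIntegrand hφ₁ h₁
  have htail_αφ₀ := timeMapT_sub_timeMapT1 hα₀ hα (c := φ₀) ⟨by linarith, by linarith⟩
  have htail_αφ₁ := timeMapT_sub_timeMapT1 hα₀ hα (c := φ₁) ⟨by linarith, hφ₁α.le⟩
  have htail_φ₁φ₀ := timeMapT_sub_timeMapT1 hφ₁ h₁ (c := φ₀) ⟨by linarith, h₀₁.le⟩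
  have hT_mono := integral_ellipticIntegrand_le_integral (b := π / 2) hkk hk le_rfl (by positivity)
  have htail_mono := integral_ellipticIntegrand_le_integral hkk hk
    (substAngle_le_substAngle (sin_nonneg_of_nonneg_of_le_pi h₀.le (by linarith)) hφ₁ hφ₁α.le
      hα.le)
    (arcsin_le_pi_div_two _)
  have htail_pos : 0 < ∫ θ in substAngle α φ₁..π / 2, ellipticIntegrand (sin α) θ :=
    intervalIntegral.intervalIntegral_pos_of_pos_on
      ((continuous_ellipticIntegrand hk).intervalIntegrable _ _)
      (fun θ _ ↦ ellipticIntegrand_pos hk θ)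
      (substAngle_lt_pi_div_two (by linarith) hφ₁α hα.le hα₀)
  linarith
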